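/- arXiv:1203.6714 — 4 statements merged into one kernel-verified Lean document; each statement's English description precedes it below -/
import Mathlib

section
/- Let V be a real vector space with finrank ℝ V = 2n and n ≥ 2, and let ω ∈ ⋀²V satisfy ωⁿ ≠ 0. If α ∈ ⋀¹V satisfies α·ω = 0 in the exterior algebra, then α = 0. (Consequently the Lee form α in the defining equation dJ = 2α∧J of a conformally symplectic structure is uniquely determined by J.) -/
open ExteriorAlgebra CliffordAlgebra

/-- Contraction maps `⋀² V` into the range of `ι`. -/
lemma contract_sq_mem {V : Type*} [AddCommGroup V] [Module ℝ V]
    (f : Module.Dual ℝ V) (ω : ExteriorAlgebra ℝ V) (hω : ω ∈ ⋀[ℝ]^2 V) :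
    contractLeft (Q := (0 : QuadraticForm ℝ V)) f ω ∈ LinearMap.range (ι ℝ : V →ₗ[ℝ] _) := by
  rw [exteriorPower, pow_two] at hω
  refine Submodule.mul_induction_on hω ?_ ?_
  · rintro x ⟨a, rfl⟩ y ⟨b, rfl⟩
    rw [show (ι ℝ a : ExteriorAlgebra ℝ V) = CliffordAlgebra.ι _ a from rfl,
      CliffordAlgebra.contractLeft_ι_mul, CliffordAlgebra.contractLeft_ι]
    refine Submodule.sub_mem _ ?_ ?_
    · exact Submodule.smul_mem _ _ ⟨b, rfl⟩
    · rw [← Algebra.commutes, ← Algebra.smul_def]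
      exact Submodule.smul_mem _ _ ⟨a, rfl⟩
  · intro x y ihx ihy
    rw [map_add]; exact Submodule.add_mem _ ihx ihy

/-- If `V` has dimension `2n` with `n ≥ 2` and `ω ∈ ⋀²V` satisfies `ωⁿ ≠ 0`, then any
`α ∈ ⋀¹V` with `α * ω = 0` in the exterior algebra vanishes.  (Pointwise uniqueness of the
Lee form of a conformally symplectic structure.) -/
theorem lee_form_unique
    {V : Type*} [AddCommGroup V] [Module ℝ V] [FiniteDimensional ℝ V]
    {n : ℕ} (hn : 2 ≤ n) (hdim : Module.finrank ℝ V = 2 * n)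
    (ω : ExteriorAlgebra ℝ V) (hω : ω ∈ ⋀[ℝ]^2 V) (hnd : ω ^ n ≠ 0)
    (α : ExteriorAlgebra ℝ V) (hα : α ∈ ⋀[ℝ]^1 V) (h : α * ω = 0) :
    α = 0 := by
  rw [exteriorPower, pow_one] at hα
  obtain ⟨v, rfl⟩ := hα
  rcases eq_or_ne v 0 with rfl | hv
  · simp
  exfalso
  -- find a dual functional with f v = 1
  obtain ⟨f, hf⟩ : ∃ f : Module.Dual ℝ V, f v = 1 := by
    have := (Module.forall_dual_apply_eq_zero_iff ℝ v).not.mpr hv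
    push_neg at this
    obtain ⟨g, hg⟩ := this
    exact ⟨(g v)⁻¹ • g, by simp [inv_mul_cancel₀ hg]⟩
  -- contract the equation α * ω = 0
  set β := contractLeft (Q := (0 : QuadraticForm ℝ V)) f ω with hβ
  have key : ω = ι ℝ v * β := by
    have := congrArg (contractLeft (Q := (0 : QuadraticForm ℝ V)) f) h
    rw [map_zero, show (ι ℝ v : ExteriorAlgebra ℝ V) = CliffordAlgebra.ι _ v from rfl,
      CliffordAlgebra.contractLeft_ι_mul, hf, one_smul, sub_eq_zero] at this
    exact this
  obtain ⟨w, hw⟩ := contract_sq_mem f ω hω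
  rw [← hβ] at hw
  have hsq : ω ^ 2 = 0 := by
    rw [key, ← hw, pow_two]
    have hanti : ι ℝ w * ι ℝ v = -(ι ℝ v * ι ℝ w) := by
      rw [eq_neg_iff_add_eq_zero, add_comm]
      exact ι_add_mul_swap v w
    calc ι ℝ v * ι ℝ w * (ι ℝ v * ι ℝ w)
        = ι ℝ v * (ι ℝ w * ι ℝ v) * ι ℝ w := by noncomm_ring
      _ = 0 := by rw [hanti]; simp [ι_sq_zero, mul_assoc]
  exact hnd (by rw [show n = 2 + (n - 2) by omega, pow_add, hsq, zero_mul])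
end

section
/- Let V be a real vector space with finrank ℝ V = 2n and n ≥ 3, and let ω ∈ ⋀²V satisfy ωⁿ ≠ 0. If β ∈ ⋀²V satisfies β·ω = 0 in the exterior algebra, then β = 0. (This is the pointwise fact, dα∧J = 0 ⟹ dα = 0, showing that the Lee form of a conformally symplectic manifold of dimension at least 6 is closed.) -/
/-!
Contracting `β * ω = 0` with a covector `f` gives `(f ⌋ β) * ω = -β * (f ⌋ ω)`. Contracting
`β * ωⁿ⁻¹ = 0` as well and comparing yields `(n - 2) • β * (f ⌋ ω) * ωⁿ⁻² = 0`, hence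
`(f ⌋ β) * ωⁿ⁻¹ = 0` as soon as `n ≥ 3`. Contracting this with a second covector `g` and
multiplying by `ω` leaves `(g ⌋ f ⌋ β) • ωⁿ = 0`, so all double contractions of `β` vanish.
By the Euler identity `∑ eᵢ * (eᵢ* ⌋ x) = k • x` on `⋀ᵏV`, an element of positive degree all of
whose contractions vanish is zero; applied in degrees one and two this gives `β = 0`.
-/

open ExteriorAlgebra

namespace ExteriorAlgebra

section CommRing

variable {R M : Type*} [CommRing R] [AddCommGroup M] [Module R M]

/-- `ExteriorAlgebra R M` is by definition `CliffordAlgebra (0 : QuadraticForm R M)`, whose left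
contraction is the interior product. -/
noncomputable abbrev contract (f : Module.Dual R M) :
    ExteriorAlgebra R M →ₗ[R] ExteriorAlgebra R M :=
  CliffordAlgebra.contractLeft (Q := 0) f

theorem contract_ι (f : Module.Dual R M) (a : M) :
    contract f (ι R a) = algebraMap R (ExteriorAlgebra R M) (f a) :=
  CliffordAlgebra.contractLeft_ι _ _ _

theorem contract_ι_mul (f : Module.Dual R M) (a : M) (x : ExteriorAlgebra R M) :
    contract f (ι R a * x) = f a • x - ι R a * contract f x :=
  CliffordAlgebra.contractLeft_ι_mul _ _ _

theorem ι_mul_ι_eq_neg (a b : M) : ι R a * ι R b = -(ι R b * ι R a) :=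
  eq_neg_of_add_eq_zero_left (ι_add_mul_swap a b)

@[elab_as_elim]
theorem exteriorPower_two_induction {P : ExteriorAlgebra R M → Prop}
    (ι_mul_ι : ∀ a b : M, P (ι R a * ι R b)) (add : ∀ x y, P x → P y → P (x + y))
    {x : ExteriorAlgebra R M} (hx : x ∈ ⋀[R]^2 M) : P x := by
  rw [exteriorPower, pow_two] at hx
  refine Submodule.mul_induction_on hx ?_ add
  rintro _ ⟨a, rfl⟩ _ ⟨b, rfl⟩
  exact ι_mul_ι a b

theorem commute_of_mem_exteriorPower_two {ω : ExteriorAlgebra R M} (hω : ω ∈ ⋀[R]^2 M)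
    (x : ExteriorAlgebra R M) : Commute ω x := by
  refine exteriorPower_two_induction (fun a b => ?_) (fun _ _ hx hy => hx.add_left hy) hω
  induction x using ExteriorAlgebra.induction with
  | algebraMap r => exact (Algebra.commutes r _).symm
  | ι c =>
    change _ = _
    rw [mul_assoc, ι_mul_ι_eq_neg b c, mul_neg, ← mul_assoc, ι_mul_ι_eq_neg a c,
      neg_mul, neg_neg, mul_assoc]
  | mul x y hx hy => exact hx.mul_right hy
  | add x y hx hy => exact hx.add_right hy

theorem contract_mul_of_mem_exteriorPower_two (f : Module.Dual R M) {β : ExteriorAlgebra R M}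
    (hβ : β ∈ ⋀[R]^2 M) (y : ExteriorAlgebra R M) :
    contract f (β * y) = contract f β * y + β * contract f y := by
  refine exteriorPower_two_induction (fun a b => ?_) (fun x y hx hy => ?_) hβ
  · rw [mul_assoc, contract_ι_mul, contract_ι_mul, contract_ι_mul, contract_ι]
    simp only [mul_sub, sub_mul, smul_mul_assoc, mul_smul_comm, mul_assoc,
      Algebra.algebraMap_eq_smul_one, one_mul]
    abel
  · simp only [add_mul, map_add, hx, hy]
    abel

theorem contract_mem_exteriorPower_one (f : Module.Dual R M) {β : ExteriorAlgebra R M}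
    (hβ : β ∈ ⋀[R]^2 M) : contract f β ∈ ⋀[R]^1 M := by
  rw [exteriorPower, pow_one]
  refine exteriorPower_two_induction (fun a b => ?_) (fun x y hx hy => ?_) hβ
  · refine ⟨f a • b - f b • a, ?_⟩
    rw [contract_ι_mul, contract_ι, Algebra.algebraMap_eq_smul_one, mul_smul_comm, mul_one,
      map_sub, map_smul, map_smul]
  · rw [map_add]
    exact add_mem hx hy

theorem contract_mul_eq_neg_of_mul_eq_zero (f : Module.Dual R M) {ω β : ExteriorAlgebra R M}
    (hβ : β ∈ ⋀[R]^2 M) (h : β * ω = 0) : contract f β * ω = -(β * contract f ω) := by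
  have := congrArg (contract f) h
  rwa [contract_mul_of_mem_exteriorPower_two f hβ, map_zero, add_eq_zero_iff_eq_neg] at this

theorem contract_pow_succ (f : Module.Dual R M) {ω : ExteriorAlgebra R M}
    (hω : ω ∈ ⋀[R]^2 M) (k : ℕ) :
    contract f (ω ^ (k + 1)) = (k + 1) • (contract f ω * ω ^ k) := by
  induction k with
  | zero => simp
  | succ k ih =>
    rw [pow_succ', contract_mul_of_mem_exteriorPower_two f hω, ih, mul_smul_comm, ← mul_assoc,
      (commute_of_mem_exteriorPower_two hω _).eq, mul_assoc, ← pow_succ']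
    exact (succ_nsmul' _ _).symm

theorem sum_ι_mul_contract {I : Type*} [Fintype I] (b : Module.Basis I R M) {k : ℕ}
    {x : ExteriorAlgebra R M} (hx : x ∈ ⋀[R]^k M) :
    ∑ i, ι R (b i) * contract (b.coord i) x = k • x := by
  induction hx using Submodule.pow_induction_on_left' with
  | algebraMap r => simp
  | add x y i _ _ ihx ihy =>
    simp only [map_add, mul_add, Finset.sum_add_distrib, ihx, ihy, smul_add]
  | mem_mul a ha i x _ ih =>
    obtain ⟨a, rfl⟩ := ha
    have hterm : ∀ j, ι R (b j) * contract (b.coord j) (ι R a * x) =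
        b.coord j a • ι R (b j) * x + ι R a * (ι R (b j) * contract (b.coord j) x) := by
      intro j
      rw [contract_ι_mul, mul_sub, mul_smul_comm, smul_mul_assoc, ← mul_assoc,
        ι_mul_ι_eq_neg (b j) a, neg_mul, sub_neg_eq_add, mul_assoc]
    have hsum : ∑ j, b.coord j a • ι R (b j) = ι R a := by
      simp_rw [Module.Basis.coord_apply, ← map_smul, ← map_sum, b.sum_repr]
    simp only [hterm, Finset.sum_add_distrib, ← Finset.sum_mul, ← Finset.mul_sum, hsum, ih,
      mul_smul_comm, succ_nsmul']

end CommRing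

section Field

variable {K V : Type*} [Field K] [CharZero K] [AddCommGroup V] [Module K V]

theorem eq_zero_of_forall_contract_eq_zero [FiniteDimensional K V] {k : ℕ}
    {x : ExteriorAlgebra K V} (hx : x ∈ ⋀[K]^k V) (hk : k ≠ 0)
    (h : ∀ f : Module.Dual K V, contract f x = 0) : x = 0 := by
  have := sum_ι_mul_contract (Module.finBasis K V) hx
  simp only [h, mul_zero, Finset.sum_const_zero] at this
  rw [← Nat.cast_smul_eq_nsmul K] at this
  exact (smul_eq_zero.mp this.symm).resolve_left (Nat.cast_ne_zero.mpr hk)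

theorem mul_contract_mul_pow_eq_zero_of_mul_eq_zero (f : Module.Dual K V)
    {ω β : ExteriorAlgebra K V} (hω : ω ∈ ⋀[K]^2 V) (hβ : β ∈ ⋀[K]^2 V) (h : β * ω = 0)
    {m : ℕ} (hm : m ≠ 0) : β * (contract f ω * ω ^ m) = 0 := by
  have hcontr : contract f (β * ω ^ (m + 1)) = 0 := by
    rw [pow_succ', ← mul_assoc, h, zero_mul, map_zero]
  rw [contract_mul_of_mem_exteriorPower_two f hβ, contract_pow_succ f hω, pow_succ', ← mul_assoc,
    contract_mul_eq_neg_of_mul_eq_zero f hβ h, neg_mul, mul_assoc, mul_smul_comm, succ_nsmul',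
    neg_add_cancel_left, ← Nat.cast_smul_eq_nsmul K] at hcontr
  exact (smul_eq_zero.mp hcontr).resolve_left (Nat.cast_ne_zero.mpr hm)

theorem contract_contract_eq_zero_of_mul_eq_zero (f g : Module.Dual K V)
    {ω β : ExteriorAlgebra K V} (hω : ω ∈ ⋀[K]^2 V) (hβ : β ∈ ⋀[K]^2 V) (h : β * ω = 0)
    {m : ℕ} (hm : m ≠ 0) (hnd : ω ^ (m + 2) ≠ 0) : contract g (contract f β) = 0 := by
  obtain ⟨a, ha⟩ : contract f β ∈ LinearMap.range (ι K) := by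
    simpa [exteriorPower, pow_one] using contract_mem_exteriorPower_one f hβ
  have hcomm := commute_of_mem_exteriorPower_two hω
  have hβu := mul_contract_mul_pow_eq_zero_of_mul_eq_zero f hω hβ h hm
  have haω : ι K a * ω = -(β * contract f ω) := ha ▸ contract_mul_eq_neg_of_mul_eq_zero f hβ h
  have haω_pow : ι K a * ω ^ (m + 1) = 0 := by
    rw [pow_succ', ← mul_assoc, haω, neg_mul, mul_assoc, hβu, neg_zero]
  have hagω : ι K a * (contract g ω * ω ^ m) * ω = 0 := calc
    _ = ι K a * ω * (contract g ω * ω ^ m) := by rw [mul_assoc, ← (hcomm _).eq, ← mul_assoc]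
    _ = -(β * (contract f ω * ω ^ m) * contract g ω) := by
      rw [haω, ← ((hcomm (contract g ω)).pow_left m).eq, neg_mul]
      simp only [mul_assoc]
    _ = 0 := by rw [hβu, zero_mul, neg_zero]
  have hgaω := congrArg (contract g · * ω) haω_pow
  simp only [contract_ι_mul, contract_pow_succ g hω, sub_mul, smul_mul_assoc, mul_smul_comm,
    hagω, smul_zero, sub_zero, ← pow_succ, map_zero, zero_mul] at hgaω
  rw [← ha, contract_ι, (smul_eq_zero.mp hgaω).resolve_right hnd, map_zero]

end Field

end ExteriorAlgebra

theorem lee_form_closed_pointwise_general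
    {V : Type*} [AddCommGroup V] [Module ℝ V] [FiniteDimensional ℝ V]
    {n : ℕ} (hn : 3 ≤ n)
    (ω : ExteriorAlgebra ℝ V) (hω : ω ∈ ⋀[ℝ]^2 V) (hnd : ω ^ n ≠ 0)
    (β : ExteriorAlgebra ℝ V) (hβ : β ∈ ⋀[ℝ]^2 V) (h : β * ω = 0) :
    β = 0 := by
  obtain ⟨m, rfl⟩ : ∃ m, n = m + 2 := ⟨n - 2, by omega⟩
  refine eq_zero_of_forall_contract_eq_zero hβ two_ne_zero fun f => ?_
  refine eq_zero_of_forall_contract_eq_zero (contract_mem_exteriorPower_one f hβ) one_ne_zero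
    fun g => ?_
  exact contract_contract_eq_zero_of_mul_eq_zero f g hω hβ h (by omega) hnd

/-- If `V` has dimension `2n` with `n ≥ 3` and `ω ∈ ⋀²V` satisfies `ωⁿ ≠ 0`, then any
`β ∈ ⋀²V` with `β * ω = 0` in the exterior algebra vanishes.  (Pointwise form of the fact
that the Lee form of a conformally symplectic manifold of dimension at least 6 is closed.) -/
theorem lee_form_closed_pointwise
    {V : Type*} [AddCommGroup V] [Module ℝ V] [FiniteDimensional ℝ V]
    {n : ℕ} (hn : 3 ≤ n) (hdim : Module.finrank ℝ V = 2 * n)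
    (ω : ExteriorAlgebra ℝ V) (hω : ω ∈ ⋀[ℝ]^2 V) (hnd : ω ^ n ≠ 0)
    (β : ExteriorAlgebra ℝ V) (hβ : β ∈ ⋀[ℝ]^2 V) (h : β * ω = 0) :
    β = 0 :=
  lee_form_closed_pointwise_general hn ω hω hnd β hβ h
end

section
/- Let e₁,…,e₇ be the standard basis of ℝ⁷, and let φ = e^{123} + e^{145} + e^{167} + e^{246} − e^{257} − e^{347} − e^{356} ∈ ⋀³ℝ⁷ be the fundamental 3-form of G₂. Then the linear map ⋀³ℝ⁷ → ⋀⁶ℝ⁷ given by x ↦ φ·x is surjective. -/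
open ExteriorAlgebra

/-- The images in the exterior algebra of the standard basis vectors of `ℝ⁷`. -/
noncomputable def g2e (i : Fin 7) : ExteriorAlgebra ℝ (Fin 7 → ℝ) :=
  ExteriorAlgebra.ι ℝ (Pi.single i (1 : ℝ))

/-- The fundamental (Cayley) 3-form of `G₂`:
`φ = e¹²³ + e¹⁴⁵ + e¹⁶⁷ + e²⁴⁶ − e²⁵⁷ − e³⁴⁷ − e³⁵⁶` (indices `1,…,7` written `0,…,6`). -/
noncomputable def g2phi : ExteriorAlgebra ℝ (Fin 7 → ℝ) :=
  g2e 0 * g2e 1 * g2e 2 + g2e 0 * g2e 3 * g2e 4 + g2e 0 * g2e 5 * g2e 6 +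
  g2e 1 * g2e 3 * g2e 5 - g2e 1 * g2e 4 * g2e 6 - g2e 2 * g2e 3 * g2e 6 -
  g2e 2 * g2e 4 * g2e 5

lemma g2e_sq (i : Fin 7) : g2e i * g2e i = 0 := ι_sq_zero _
lemma g2e_anticomm (i j : Fin 7) : g2e j * g2e i = -(g2e i * g2e j) := by
  have h := ι_add_mul_swap (R := ℝ) (Pi.single i (1:ℝ) : Fin 7 → ℝ) (Pi.single j (1:ℝ) : Fin 7 → ℝ)
  rw [add_comm] at h
  exact eq_neg_of_add_eq_zero_left h
lemma g2e_anticommL (i j : Fin 7) (x : ExteriorAlgebra ℝ (Fin 7 → ℝ)) :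
    g2e j * (g2e i * x) = -(g2e i * (g2e j * x)) := by
  rw [← mul_assoc, g2e_anticomm i j, neg_mul, mul_assoc]
lemma g2e_sqL (i : Fin 7) (x : ExteriorAlgebra ℝ (Fin 7 → ℝ)) :
    g2e i * (g2e i * x) = 0 := by rw [← mul_assoc, g2e_sq, zero_mul]

lemma g2swap_10 : g2e 1 * g2e 0 = -(g2e 0 * g2e 1) := g2e_anticomm 0 1
lemma g2swapL_10 (x : ExteriorAlgebra ℝ (Fin 7 → ℝ)) : g2e 1 * (g2e 0 * x) = -(g2e 0 * (g2e 1 * x)) := g2e_anticommL 0 1 x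
lemma g2swap_20 : g2e 2 * g2e 0 = -(g2e 0 * g2e 2) := g2e_anticomm 0 2
lemma g2swapL_20 (x : ExteriorAlgebra ℝ (Fin 7 → ℝ)) : g2e 2 * (g2e 0 * x) = -(g2e 0 * (g2e 2 * x)) := g2e_anticommL 0 2 x
lemma g2swap_30 : g2e 3 * g2e 0 = -(g2e 0 * g2e 3) := g2e_anticomm 0 3
lemma g2swapL_30 (x : ExteriorAlgebra ℝ (Fin 7 → ℝ)) : g2e 3 * (g2e 0 * x) = -(g2e 0 * (g2e 3 * x)) := g2e_anticommL 0 3 x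
lemma g2swap_40 : g2e 4 * g2e 0 = -(g2e 0 * g2e 4) := g2e_anticomm 0 4
lemma g2swapL_40 (x : ExteriorAlgebra ℝ (Fin 7 → ℝ)) : g2e 4 * (g2e 0 * x) = -(g2e 0 * (g2e 4 * x)) := g2e_anticommL 0 4 x
lemma g2swap_50 : g2e 5 * g2e 0 = -(g2e 0 * g2e 5) := g2e_anticomm 0 5
lemma g2swapL_50 (x : ExteriorAlgebra ℝ (Fin 7 → ℝ)) : g2e 5 * (g2e 0 * x) = -(g2e 0 * (g2e 5 * x)) := g2e_anticommL 0 5 x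
lemma g2swap_60 : g2e 6 * g2e 0 = -(g2e 0 * g2e 6) := g2e_anticomm 0 6
lemma g2swapL_60 (x : ExteriorAlgebra ℝ (Fin 7 → ℝ)) : g2e 6 * (g2e 0 * x) = -(g2e 0 * (g2e 6 * x)) := g2e_anticommL 0 6 x
lemma g2swap_21 : g2e 2 * g2e 1 = -(g2e 1 * g2e 2) := g2e_anticomm 1 2
lemma g2swapL_21 (x : ExteriorAlgebra ℝ (Fin 7 → ℝ)) : g2e 2 * (g2e 1 * x) = -(g2e 1 * (g2e 2 * x)) := g2e_anticommL 1 2 x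
lemma g2swap_31 : g2e 3 * g2e 1 = -(g2e 1 * g2e 3) := g2e_anticomm 1 3
lemma g2swapL_31 (x : ExteriorAlgebra ℝ (Fin 7 → ℝ)) : g2e 3 * (g2e 1 * x) = -(g2e 1 * (g2e 3 * x)) := g2e_anticommL 1 3 x
lemma g2swap_41 : g2e 4 * g2e 1 = -(g2e 1 * g2e 4) := g2e_anticomm 1 4
lemma g2swapL_41 (x : ExteriorAlgebra ℝ (Fin 7 → ℝ)) : g2e 4 * (g2e 1 * x) = -(g2e 1 * (g2e 4 * x)) := g2e_anticommL 1 4 x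
lemma g2swap_51 : g2e 5 * g2e 1 = -(g2e 1 * g2e 5) := g2e_anticomm 1 5
lemma g2swapL_51 (x : ExteriorAlgebra ℝ (Fin 7 → ℝ)) : g2e 5 * (g2e 1 * x) = -(g2e 1 * (g2e 5 * x)) := g2e_anticommL 1 5 x
lemma g2swap_61 : g2e 6 * g2e 1 = -(g2e 1 * g2e 6) := g2e_anticomm 1 6
lemma g2swapL_61 (x : ExteriorAlgebra ℝ (Fin 7 → ℝ)) : g2e 6 * (g2e 1 * x) = -(g2e 1 * (g2e 6 * x)) := g2e_anticommL 1 6 x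
lemma g2swap_32 : g2e 3 * g2e 2 = -(g2e 2 * g2e 3) := g2e_anticomm 2 3
lemma g2swapL_32 (x : ExteriorAlgebra ℝ (Fin 7 → ℝ)) : g2e 3 * (g2e 2 * x) = -(g2e 2 * (g2e 3 * x)) := g2e_anticommL 2 3 x
lemma g2swap_42 : g2e 4 * g2e 2 = -(g2e 2 * g2e 4) := g2e_anticomm 2 4
lemma g2swapL_42 (x : ExteriorAlgebra ℝ (Fin 7 → ℝ)) : g2e 4 * (g2e 2 * x) = -(g2e 2 * (g2e 4 * x)) := g2e_anticommL 2 4 x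
lemma g2swap_52 : g2e 5 * g2e 2 = -(g2e 2 * g2e 5) := g2e_anticomm 2 5
lemma g2swapL_52 (x : ExteriorAlgebra ℝ (Fin 7 → ℝ)) : g2e 5 * (g2e 2 * x) = -(g2e 2 * (g2e 5 * x)) := g2e_anticommL 2 5 x
lemma g2swap_62 : g2e 6 * g2e 2 = -(g2e 2 * g2e 6) := g2e_anticomm 2 6
lemma g2swapL_62 (x : ExteriorAlgebra ℝ (Fin 7 → ℝ)) : g2e 6 * (g2e 2 * x) = -(g2e 2 * (g2e 6 * x)) := g2e_anticommL 2 6 x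
lemma g2swap_43 : g2e 4 * g2e 3 = -(g2e 3 * g2e 4) := g2e_anticomm 3 4
lemma g2swapL_43 (x : ExteriorAlgebra ℝ (Fin 7 → ℝ)) : g2e 4 * (g2e 3 * x) = -(g2e 3 * (g2e 4 * x)) := g2e_anticommL 3 4 x
lemma g2swap_53 : g2e 5 * g2e 3 = -(g2e 3 * g2e 5) := g2e_anticomm 3 5
lemma g2swapL_53 (x : ExteriorAlgebra ℝ (Fin 7 → ℝ)) : g2e 5 * (g2e 3 * x) = -(g2e 3 * (g2e 5 * x)) := g2e_anticommL 3 5 x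
lemma g2swap_63 : g2e 6 * g2e 3 = -(g2e 3 * g2e 6) := g2e_anticomm 3 6
lemma g2swapL_63 (x : ExteriorAlgebra ℝ (Fin 7 → ℝ)) : g2e 6 * (g2e 3 * x) = -(g2e 3 * (g2e 6 * x)) := g2e_anticommL 3 6 x
lemma g2swap_54 : g2e 5 * g2e 4 = -(g2e 4 * g2e 5) := g2e_anticomm 4 5
lemma g2swapL_54 (x : ExteriorAlgebra ℝ (Fin 7 → ℝ)) : g2e 5 * (g2e 4 * x) = -(g2e 4 * (g2e 5 * x)) := g2e_anticommL 4 5 x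
lemma g2swap_64 : g2e 6 * g2e 4 = -(g2e 4 * g2e 6) := g2e_anticomm 4 6
lemma g2swapL_64 (x : ExteriorAlgebra ℝ (Fin 7 → ℝ)) : g2e 6 * (g2e 4 * x) = -(g2e 4 * (g2e 6 * x)) := g2e_anticommL 4 6 x
lemma g2swap_65 : g2e 6 * g2e 5 = -(g2e 5 * g2e 6) := g2e_anticomm 5 6
lemma g2swapL_65 (x : ExteriorAlgebra ℝ (Fin 7 → ℝ)) : g2e 6 * (g2e 5 * x) = -(g2e 5 * (g2e 6 * x)) := g2e_anticommL 5 6 x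
lemma g2sq_0 : g2e 0 * g2e 0 = 0 := g2e_sq 0
lemma g2sqL_0 (x : ExteriorAlgebra ℝ (Fin 7 → ℝ)) : g2e 0 * (g2e 0 * x) = 0 := g2e_sqL 0 x
lemma g2sq_1 : g2e 1 * g2e 1 = 0 := g2e_sq 1
lemma g2sqL_1 (x : ExteriorAlgebra ℝ (Fin 7 → ℝ)) : g2e 1 * (g2e 1 * x) = 0 := g2e_sqL 1 x
lemma g2sq_2 : g2e 2 * g2e 2 = 0 := g2e_sq 2
lemma g2sqL_2 (x : ExteriorAlgebra ℝ (Fin 7 → ℝ)) : g2e 2 * (g2e 2 * x) = 0 := g2e_sqL 2 x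
lemma g2sq_3 : g2e 3 * g2e 3 = 0 := g2e_sq 3
lemma g2sqL_3 (x : ExteriorAlgebra ℝ (Fin 7 → ℝ)) : g2e 3 * (g2e 3 * x) = 0 := g2e_sqL 3 x
lemma g2sq_4 : g2e 4 * g2e 4 = 0 := g2e_sq 4
lemma g2sqL_4 (x : ExteriorAlgebra ℝ (Fin 7 → ℝ)) : g2e 4 * (g2e 4 * x) = 0 := g2e_sqL 4 x
lemma g2sq_5 : g2e 5 * g2e 5 = 0 := g2e_sq 5
lemma g2sqL_5 (x : ExteriorAlgebra ℝ (Fin 7 → ℝ)) : g2e 5 * (g2e 5 * x) = 0 := g2e_sqL 5 x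
lemma g2sq_6 : g2e 6 * g2e 6 = 0 := g2e_sq 6
lemma g2sqL_6 (x : ExteriorAlgebra ℝ (Fin 7 → ℝ)) : g2e 6 * (g2e 6 * x) = 0 := g2e_sqL 6 x

attribute [local simp] g2swap_10 g2swapL_10 g2swap_20 g2swapL_20 g2swap_30 g2swapL_30 g2swap_40 g2swapL_40 g2swap_50 g2swapL_50 g2swap_60 g2swapL_60 g2swap_21 g2swapL_21 g2swap_31 g2swapL_31 g2swap_41 g2swapL_41 g2swap_51 g2swapL_51 g2swap_61 g2swapL_61 g2swap_32 g2swapL_32 g2swap_42 g2swapL_42 g2swap_52 g2swapL_52 g2swap_62 g2swapL_62 g2swap_43 g2swapL_43 g2swap_53 g2swapL_53 g2swap_63 g2swapL_63 g2swap_54 g2swapL_54 g2swap_64 g2swapL_64 g2swap_65 g2swapL_65 g2sq_0 g2sqL_0 g2sq_1 g2sqL_1 g2sq_2 g2sqL_2 g2sq_3 g2sqL_3 g2sq_4 g2sqL_4 g2sq_5 g2sqL_5 g2sq_6 g2sqL_6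

-- the seven key identities
lemma g2k6 : g2phi * (g2e 3 * g2e 4 * g2e 5) = g2e 0*g2e 1*g2e 2*g2e 3*g2e 4*g2e 5 := by
  simp [g2phi, add_mul, sub_mul, mul_assoc]
lemma g2k5 : g2phi * (g2e 3 * g2e 4 * g2e 6) = g2e 0*g2e 1*g2e 2*g2e 3*g2e 4*g2e 6 := by
  simp [g2phi, add_mul, sub_mul, mul_assoc]
lemma g2k4 : g2phi * (g2e 3 * g2e 5 * g2e 6) = g2e 0*g2e 1*g2e 2*g2e 3*g2e 5*g2e 6 := by
  simp [g2phi, add_mul, sub_mul, mul_assoc]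
lemma g2k3 : g2phi * (g2e 4 * g2e 5 * g2e 6) = g2e 0*g2e 1*g2e 2*g2e 4*g2e 5*g2e 6 := by
  simp [g2phi, add_mul, sub_mul, mul_assoc]
lemma g2k2 : g2phi * (g2e 1 * g2e 5 * g2e 6) = g2e 0*g2e 1*g2e 3*g2e 4*g2e 5*g2e 6 := by
  simp [g2phi, add_mul, sub_mul, mul_assoc]
lemma g2k1 : g2phi * (g2e 2 * g2e 5 * g2e 6) = g2e 0*g2e 2*g2e 3*g2e 4*g2e 5*g2e 6 := by
  simp [g2phi, add_mul, sub_mul, mul_assoc]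
lemma g2k0 : g2phi * (g2e 2 * g2e 4 * g2e 6) = -(g2e 1*g2e 2*g2e 3*g2e 4*g2e 5*g2e 6) := by
  simp [g2phi, add_mul, sub_mul, mul_assoc]

/-- The image of the 3rd exterior power under left multiplication by `g2phi`. -/
noncomputable def g2J : Submodule ℝ (ExteriorAlgebra ℝ (Fin 7 → ℝ)) :=
  Submodule.map (LinearMap.mulLeft ℝ g2phi) (⋀[ℝ]^3 (Fin 7 → ℝ))

lemma g2e_cube_mem (a b c : Fin 7) : g2e a * g2e b * g2e c ∈ ⋀[ℝ]^3 (Fin 7 → ℝ) := by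
  show _ ∈ LinearMap.range (ι ℝ : (Fin 7 → ℝ) →ₗ[ℝ] _) ^ 3
  rw [pow_succ, pow_succ, pow_one]
  exact Submodule.mul_mem_mul
    (Submodule.mul_mem_mul (LinearMap.mem_range_self _ _) (LinearMap.mem_range_self _ _))
    (LinearMap.mem_range_self _ _)

lemma g2_prod_mem (k : Fin 7) :
    g2e (k.succAbove 0) * g2e (k.succAbove 1) * g2e (k.succAbove 2) * g2e (k.succAbove 3) *
      g2e (k.succAbove 4) * g2e (k.succAbove 5) ∈ g2J := by
  fin_cases k
  · refine ⟨-(g2e 2 * g2e 4 * g2e 6), Submodule.neg_mem _ (g2e_cube_mem 2 4 6), ?_⟩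
    show g2phi * _ = _
    rw [mul_neg, g2k0, neg_neg]; rfl
  · exact ⟨g2e 2 * g2e 5 * g2e 6, g2e_cube_mem 2 5 6, g2k1⟩
  · exact ⟨g2e 1 * g2e 5 * g2e 6, g2e_cube_mem 1 5 6, g2k2⟩
  · exact ⟨g2e 4 * g2e 5 * g2e 6, g2e_cube_mem 4 5 6, g2k3⟩
  · exact ⟨g2e 3 * g2e 5 * g2e 6, g2e_cube_mem 3 5 6, g2k4⟩
  · exact ⟨g2e 3 * g2e 4 * g2e 6, g2e_cube_mem 3 4 6, g2k5⟩
  · exact ⟨g2e 3 * g2e 4 * g2e 5, g2e_cube_mem 3 4 5, g2k6⟩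

lemma g2_iotaMulti_eq (f : Fin 6 → Fin 7) :
    ιMulti ℝ 6 (fun i => (Pi.single (f i) 1 : Fin 7 → ℝ)) =
      g2e (f 0) * g2e (f 1) * g2e (f 2) * g2e (f 3) * g2e (f 4) * g2e (f 5) := by
  rw [ιMulti_apply]
  simp only [List.ofFn_succ, List.ofFn_zero, List.prod_cons, List.prod_nil, mul_one]
  simp only [g2e, mul_assoc]
  rfl

lemma g2_sorted_iotaMulti_mem (k : Fin 7) :
    ιMulti ℝ 6 (fun i => (Pi.single (k.succAbove i) 1 : Fin 7 → ℝ)) ∈ g2J := by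
  rw [g2_iotaMulti_eq]
  exact g2_prod_mem k

lemma g2_basis_mem (f : Fin 6 → Fin 7) :
    ιMulti ℝ 6 (fun i => (Pi.single (f i) 1 : Fin 7 → ℝ)) ∈ g2J := by
  by_cases hf : Function.Injective f
  · have hns : ¬ Function.Surjective f := by
      intro hs
      have := Fintype.card_le_of_surjective f hs
      simp at this
    obtain ⟨k, hk⟩ : ∃ k, ∀ i, f i ≠ k := by
      unfold Function.Surjective at hns
      push_neg at hns
      exact hns
    choose σ hσ using fun i => Fin.exists_succAbove_eq (hk i)
    have hσinj : Function.Injective σ := by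
      intro a b hab
      apply hf
      rw [← hσ a, ← hσ b, hab]
    have hσbij : Function.Bijective σ := (Finite.injective_iff_bijective).1 hσinj
    set e : Equiv.Perm (Fin 6) := Equiv.ofBijective σ hσbij with he
    have hfam : (fun i => (Pi.single (f i) 1 : Fin 7 → ℝ)) =
        (fun i => (Pi.single (k.succAbove i) 1 : Fin 7 → ℝ)) ∘ e := by
      funext i
      simp only [Function.comp_apply, he, Equiv.ofBijective_apply, hσ i]
    rw [hfam, AlternatingMap.map_perm]
    rcases Int.units_eq_one_or (Equiv.Perm.sign e) with h | h <;> rw [h]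
    · simpa using g2_sorted_iotaMulti_mem k
    · have : ((-1 : ℤˣ) • ιMulti ℝ 6 (fun i => (Pi.single (k.succAbove i) 1 : Fin 7 → ℝ)))
          = -(ιMulti ℝ 6 (fun i => (Pi.single (k.succAbove i) 1 : Fin 7 → ℝ))) := by
        simp [Units.smul_def]
      rw [this]
      exact Submodule.neg_mem _ (g2_sorted_iotaMulti_mem k)
  · rw [Function.not_injective_iff] at hf
    obtain ⟨a, b, hab, hne⟩ := hf
    have h0 : ιMulti ℝ 6 (fun i => (Pi.single (f i) 1 : Fin 7 → ℝ)) = 0 :=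
      AlternatingMap.map_eq_zero_of_eq _ _ (by rw [hab]) hne
    rw [h0]
    exact Submodule.zero_mem _

lemma g2_range_mem (v : Fin 6 → (Fin 7 → ℝ)) : ιMulti ℝ 6 v ∈ g2J := by
  have hv : ∀ i, (∑ j : Fin 7, v i j • (Pi.single j 1 : Fin 7 → ℝ)) = v i := by
    intro i
    have : ∀ j : Fin 7, v i j • (Pi.single j 1 : Fin 7 → ℝ) = Pi.single j (v i j) := by
      intro j
      rw [← Pi.single_smul, smul_eq_mul, mul_one]
    simp_rw [this]
    exact Finset.univ_sum_single (v i)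
  rw [show v = fun i => ∑ j : Fin 7, v i j • (Pi.single j 1 : Fin 7 → ℝ) from
    funext fun i => (hv i).symm]
  have hexp := MultilinearMap.map_sum (ιMulti ℝ 6 (M := Fin 7 → ℝ)).toMultilinearMap
    (g := fun (i : Fin 6) (j : Fin 7) => v i j • (Pi.single j 1 : Fin 7 → ℝ))
  rw [show ((ιMulti ℝ 6 (M := Fin 7 → ℝ)).toMultilinearMap :
      MultilinearMap ℝ (fun _ : Fin 6 => Fin 7 → ℝ) _) = ⇑(ιMulti ℝ 6 (M := Fin 7 → ℝ)) from rfl]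
      at hexp
  rw [hexp]
  refine Submodule.sum_mem _ fun r _ => ?_
  have hsm := MultilinearMap.map_smul_univ (ιMulti ℝ 6 (M := Fin 7 → ℝ)).toMultilinearMap
    (fun i => v i (r i)) (fun i => (Pi.single (r i) 1 : Fin 7 → ℝ))
  rw [show ((ιMulti ℝ 6 (M := Fin 7 → ℝ)).toMultilinearMap :
      MultilinearMap ℝ (fun _ : Fin 6 => Fin 7 → ℝ) _) = ⇑(ιMulti ℝ 6 (M := Fin 7 → ℝ)) from rfl]
      at hsm
  rw [hsm]
  exact Submodule.smul_mem _ _ (g2_basis_mem r)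

/-- The linear map `⋀³ℝ⁷ → ⋀⁶ℝ⁷`, `x ↦ φ * x`, is surjective. -/
theorem g2_wedge_three_surjective :
    Set.SurjOn (fun x => g2phi * x)
      (⋀[ℝ]^3 (Fin 7 → ℝ) : Set (ExteriorAlgebra ℝ (Fin 7 → ℝ)))
      (⋀[ℝ]^6 (Fin 7 → ℝ) : Set (ExteriorAlgebra ℝ (Fin 7 → ℝ))) := by
  intro y hy
  have hle : (⋀[ℝ]^6 (Fin 7 → ℝ)) ≤ g2J := by
    rw [← ιMulti_span_fixedDegree, Submodule.span_le]
    rintro _ ⟨v, rfl⟩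
    exact g2_range_mem v
  obtain ⟨x, hx, hxy⟩ := hle hy
  exact ⟨x, hx, hxy⟩
end

section
/- Let e₁,…,e₇ be the standard basis of ℝ⁷, and let φ = e^{123} + e^{145} + e^{167} + e^{246} − e^{257} − e^{347} − e^{356} ∈ ⋀³ℝ⁷ be the fundamental 3-form of G₂. Then the kernel of the linear map ⋀³ℝ⁷ → ⋀⁶ℝ⁷ given by x ↦ φ·x has dimension 28. -/
/-!
`⋀³ℝ⁷` has dimension `35` and `⋀⁶ℝ⁷` dimension `7`, so it suffices that `φ ∧ –` maps `⋀³` onto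
`⋀⁶`. The seven terms of `φ` are the lines of a Fano plane, any two of which meet. Given `k`, let
`L` be a line avoiding `k` and `T` the complement of `L ∪ {k}`: every other line meets `T`, so
`φ ∧ e^T = ± e^L ∧ e^T = ± e^{1…k̂…7}`, and these seven 6-vectors span `⋀⁶`.
-/

open ExteriorAlgebra

open Module

theorem Fin.comp_append {α β : Type*} {m n : ℕ} (f : α → β) (a : Fin m → α) (b : Fin n → α) :
    f ∘ Fin.append a b = Fin.append (f ∘ a) (f ∘ b) := by
  funext i
  cases i using Fin.addCases <;> simp

theorem Set.powersetCard.exists_ofFinEmbEquiv_symm_eq_succAbove {n : ℕ}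
    (s : Set.powersetCard (Fin (n + 1)) n) :
    ∃ k, ⇑(Set.powersetCard.ofFinEmbEquiv.symm s) = Fin.succAbove k := by
  obtain ⟨k, hk⟩ : ∃ k, (s : Finset (Fin (n + 1)))ᶜ = {k} := by
    rw [← Finset.card_eq_one, Finset.card_compl, Fintype.card_fin, Set.powersetCard.card_eq s]
    omega
  refine ⟨k, (Finset.orderEmbOfFin_unique _ (fun i => ?_) (Fin.strictMono_succAbove k)).symm⟩
  rw [← Finset.notMem_compl, hk, Finset.mem_singleton]
  exact Fin.succAbove_ne k i

theorem Submodule.finrank_inf_ker_add_finrank_map {K V W : Type*} [DivisionRing K]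
    [AddCommGroup V] [Module K V] [AddCommGroup W] [Module K W] (p : Submodule K V)
    [FiniteDimensional K p] (f : V →ₗ[K] W) :
    finrank K ↥(p ⊓ LinearMap.ker f) + finrank K ↥(p.map f) = finrank K p := by
  rw [← LinearMap.range_domRestrict, ← Submodule.map_comap_subtype,
    Submodule.finrank_map_subtype_eq, ← LinearMap.ker_domRestrict, add_comm]
  exact LinearMap.finrank_range_add_finrank_ker _

namespace ExteriorAlgebra

variable {R M : Type*} [CommRing R] [AddCommGroup M] [Module R M]

theorem ιMulti_comp_eq_zero_of_not_injective {I : Type*} {n : ℕ} (v : I → M) {w : Fin n → I}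
    (hw : ¬Function.Injective w) : ιMulti R n (v ∘ w) = 0 :=
  ιMulti_eq_zero_of_not_inj fun h => hw h.of_comp

theorem exists_ιMulti_comp_succAbove_eq_smul {n : ℕ} (v : Fin (n + 1) → M) (k : Fin (n + 1))
    {w : Fin n → Fin (n + 1)} (hw : Function.Injective w) (hk : ∀ i, w i ≠ k) :
    ∃ ε : ℤˣ, ιMulti R n (v ∘ k.succAbove) = ε • ιMulti R n (v ∘ w) := by
  choose τ hτ using fun i => Fin.exists_succAbove_eq (hk i)
  have hτ_inj : Function.Injective τ := fun i j h => hw (by rw [← hτ i, ← hτ j, h])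
  let σ := Equiv.ofBijective τ (Finite.injective_iff_bijective.mp hτ_inj)
  have hvw : v ∘ w = (v ∘ k.succAbove) ∘ σ := by
    funext i
    simp [σ, hτ]
  refine ⟨Equiv.Perm.sign σ, ?_⟩
  rw [hvw, AlternatingMap.map_perm, smul_smul, Int.units_mul_self, one_smul]

theorem span_ιMulti_comp_succAbove {n : ℕ} {v : Fin (n + 1) → M}
    (hv : Submodule.span R (Set.range v) = ⊤) :
    Submodule.span R (Set.range fun k : Fin (n + 1) => ιMulti R n (v ∘ k.succAbove)) =
      ⋀[R]^n M := by
  refine le_antisymm ?_ ?_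
  · rw [Submodule.span_le, Set.range_subset_iff]
    exact fun k => ιMulti_range R n (Set.mem_range_self _)
  · rw [← exteriorPower.ιMulti_family_span_fixedDegree_of_span R hv, Submodule.span_le,
      Set.range_subset_iff]
    intro s
    obtain ⟨k, hk⟩ := Set.powersetCard.exists_ofFinEmbEquiv_symm_eq_succAbove s
    exact Submodule.subset_span ⟨k, by rw [ιMulti_family, hk]⟩

end ExteriorAlgebra

local notation "𝐞" => Pi.basisFun ℝ (Fin 7)

def g2Lines : Fin 7 → Fin 3 → Fin 7 :=
  ![![0, 1, 2], ![0, 3, 4], ![0, 5, 6], ![1, 3, 5], ![1, 4, 6], ![2, 3, 6], ![2, 4, 5]]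

def g2Signs : Fin 7 → ℤˣ := ![1, 1, 1, 1, -1, -1, -1]

/-- `g2Triple k` is the complement of `{k} ∪ L` for the line `L` of `φ` avoiding `k`. -/
def g2Triple : Fin 7 → Fin 3 → Fin 7 :=
  ![![1, 3, 6], ![0, 3, 6], ![0, 3, 5], ![4, 5, 6], ![3, 5, 6], ![3, 4, 6], ![3, 4, 5]]

theorem exists_g2Lines_append_g2Triple_injective_iff (k : Fin 7) :
    ∃ l, (∀ l', Function.Injective (Fin.append (g2Lines l') (g2Triple k)) ↔ l' = l) ∧
      ∀ i, Fin.append (g2Lines l) (g2Triple k) i ≠ k := by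
  revert k
  decide

theorem g2phi_eq_sum : g2phi = ∑ l, g2Signs l • ιMulti ℝ 3 (𝐞 ∘ g2Lines l) := by
  simp [g2phi, g2e, Fin.sum_univ_seven, ιMulti_apply, g2Lines, g2Signs, mul_assoc,
    Matrix.vecTail, sub_eq_add_neg]

theorem g2phi_mem : g2phi ∈ ⋀[ℝ]^3 (Fin 7 → ℝ) := by
  rw [g2phi_eq_sum]
  exact Submodule.sum_mem _ fun l _ => Submodule.smul_of_tower_mem _ _ (ιMulti_range ℝ 3 ⟨_, rfl⟩)

theorem g2phi_mul_ιMulti (t : Fin 3 → Fin 7) :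
    g2phi * ιMulti ℝ 3 (𝐞 ∘ t) = ∑ l, g2Signs l • ιMulti ℝ 6 (𝐞 ∘ Fin.append (g2Lines l) t) := by
  rw [g2phi_eq_sum, Finset.sum_mul]
  refine Finset.sum_congr rfl fun l _ => ?_
  rw [smul_mul_assoc, ιMulti_mul_ιMulti, Fin.comp_append]

theorem ιMulti_succAbove_mem_map_mulLeft_g2phi (k : Fin 7) :
    ιMulti ℝ 6 (𝐞 ∘ k.succAbove) ∈ (⋀[ℝ]^3 (Fin 7 → ℝ)).map (LinearMap.mulLeft ℝ g2phi) := by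
  obtain ⟨l, hinj, hk⟩ := exists_g2Lines_append_g2Triple_injective_iff k
  obtain ⟨ε, hε⟩ := exists_ιMulti_comp_succAbove_eq_smul (R := ℝ) 𝐞 k ((hinj l).mpr rfl) hk
  have hphi : g2phi * ιMulti ℝ 3 (𝐞 ∘ g2Triple k) =
      g2Signs l • ιMulti ℝ 6 (𝐞 ∘ Fin.append (g2Lines l) (g2Triple k)) := by
    rw [g2phi_mul_ιMulti]
    refine Finset.sum_eq_single l (fun l' _ hl' => ?_) (by simp)
    rw [ιMulti_comp_eq_zero_of_not_injective _ (mt (hinj l').mp hl'), smul_zero]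
  refine ⟨(ε * g2Signs l) • ιMulti ℝ 3 (𝐞 ∘ g2Triple k),
    Submodule.smul_of_tower_mem _ _ (ιMulti_range ℝ 3 ⟨_, rfl⟩), ?_⟩
  rw [LinearMap.mulLeft_apply, mul_smul_comm, hphi, smul_smul, mul_assoc, Int.units_mul_self,
    mul_one, hε]

theorem map_mulLeft_g2phi_exteriorPower_three :
    (⋀[ℝ]^3 (Fin 7 → ℝ)).map (LinearMap.mulLeft ℝ g2phi) = ⋀[ℝ]^6 (Fin 7 → ℝ) := by
  refine le_antisymm ?_ ?_
  · rintro _ ⟨x, hx, rfl⟩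
    exact SetLike.mul_mem_graded g2phi_mem hx
  · rw [← span_ιMulti_comp_succAbove (Pi.basisFun ℝ (Fin 7)).span_eq, Submodule.span_le,
      Set.range_subset_iff]
    exact ιMulti_succAbove_mem_map_mulLeft_g2phi

/-- The kernel of the linear map `⋀³ℝ⁷ → ⋀⁶ℝ⁷`, `x ↦ φ * x`, has dimension `28`.
(This is the fibre of the bundle `Λ⊥⁴` of the paper's complex (9).) -/
theorem g2_ker_three_finrank :
    Module.finrank ℝ
      ↥((⋀[ℝ]^3 (Fin 7 → ℝ)) ⊓ LinearMap.ker (LinearMap.mulLeft ℝ g2phi)) = 28 := by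
  have h := (⋀[ℝ]^3 (Fin 7 → ℝ)).finrank_inf_ker_add_finrank_map (LinearMap.mulLeft ℝ g2phi)
  rw [map_mulLeft_g2phi_exteriorPower_three, exteriorPower.finrank_eq, exteriorPower.finrank_eq,
    Module.finrank_fin_fun] at h
  have h73 : Nat.choose 7 3 = 35 := rfl
  have h76 : Nat.choose 7 6 = 7 := rfl
  omega
end
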